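/- arXiv:2102.07716 — 2 statements merged into one kernel-verified Lean document; each statement's English description precedes it below -/
import Mathlib

section
/- Let M̃ = (M, P_A) be a MAMDP with underlying MDP M. An action-value function Q: S×A → ℝ and a deterministic policy π satisfy the Bellman optimality objective Q(s,a) = R(s,a) + γ E_{s'~P(s,a)}[max_{a'} Q(s',a')] together with π(s) = argmax_a Q(s,a), if and only if Q is the optimal action-value function Q*_M of the underlying MDP M and π is an optimal policy for M. In particular the solution is independent of the action modification P_A. -/
open scoped BigOperators

def IsDist {X : Type*} [Fintype X] (d : X → ℝ) : Prop :=
  (∀ x, 0 ≤ d x) ∧ ∑ x, d x = 1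

def IsKernel {S A : Type*} [Fintype S] (P : S → A → S → ℝ) : Prop :=
  ∀ s a, IsDist (P s a)

def IsStochPolicy {S A : Type*} [Fintype A] (π : S → A → ℝ) : Prop :=
  ∀ s, IsDist (π s)

/-- Distribution over states after `t` steps, starting from `init`, when the
executed-action distribution in state `s` is `sel s`. -/
noncomputable def stateDist {S A : Type*} [Fintype S] [Fintype A]
    (P : S → A → S → ℝ) (sel : S → A → ℝ) (init : S → ℝ) : ℕ → S → ℝ
  | 0 => init
  | t + 1 => fun s' => ∑ s, ∑ a, stateDist P sel init t s * sel s a * P s a s'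

/-- Expected discounted return `E[∑ γ^t R(S_t, A_t)]` where `A_t ~ sel S_t`. -/
noncomputable def expReturn {S A : Type*} [Fintype S] [Fintype A]
    (P : S → A → S → ℝ) (R : S → A → ℝ) (γ : ℝ) (sel : S → A → ℝ) (init : S → ℝ) : ℝ :=
  ∑' t : ℕ, γ ^ t * ∑ s, ∑ a, stateDist P sel init t s * sel s a * R s a

/-!
For a stochastic policy `σ` with transition matrix `M_σ` and mean reward `r_σ`, the expected
return from a state is `V^σ = ∑ₜ (γ M_σ)ᵗ r_σ = (1 - γ M_σ)⁻¹ r_σ`, the fixed point of the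
policy Bellman operator `T^σ V = r_σ + γ M_σ V`. Since `M_σ` is stochastic and `γ < 1`, `T^σ`
obeys a comparison principle: a subsolution `U ≤ T^σ U` lies below a supersolution
`T^σ W ≤ W`. If `Q` solves the Bellman optimality equation, `s ↦ max_a Q(s,a)` is a
supersolution for every `σ`, and a solution for the deterministic policy greedy in `Q`. Hence
`V^σ ≤ max Q` with equality for greedy policies, which gives uniqueness of `Q*` and optimality
of greedy policies. Conversely, an optimal deterministic policy `π` has value `max Q*`, and one
Bellman step turns this into `Q*(s, π s) = max_a Q*(s,a)`.
-/

open Matrix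

theorem isDist_ite_eq {X : Type*} [Fintype X] [DecidableEq X] (x : X) :
    IsDist fun y => if y = x then (1 : ℝ) else 0 :=
  ⟨fun y => by by_cases h : y = x <;> simp [h], by simp⟩

theorem IsDist.sum_mul_le_iSup {X : Type*} [Fintype X] {p : X → ℝ} (hp : IsDist p) (f : X → ℝ) :
    ∑ x, p x * f x ≤ ⨆ x, f x :=
  calc ∑ x, p x * f x ≤ ∑ x, p x * ⨆ y, f y :=
        Finset.sum_le_sum fun x _ =>
          mul_le_mul_of_nonneg_left (le_ciSup (Set.finite_range f).bddAbove x) (hp.1 x)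
    _ = ⨆ y, f y := by rw [← Finset.sum_mul, hp.2, one_mul]

theorem nonpos_of_le_mul_iSup {ι : Type*} [Finite ι] {γ : ℝ} (hγ1 : γ < 1) {d : ι → ℝ}
    (h : ∀ i, d i ≤ γ * ⨆ j, d j) (i : ι) : d i ≤ 0 := by
  have : Nonempty ι := ⟨i⟩
  have hsup : ⨆ j, d j ≤ γ * ⨆ j, d j := ciSup_le h
  have hsup_nonpos : ⨆ j, d j ≤ 0 := by nlinarith
  exact (le_ciSup (Set.finite_range d).bddAbove i).trans hsup_nonpos

section Policy
variable {S A : Type*} [Fintype A]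

def IsGreedy (Q : S → A → ℝ) (π : S → A) : Prop :=
  ∀ s a, Q s a ≤ Q s (π s)

abbrev detPolicy [DecidableEq A] (π : S → A) : S → A → ℝ :=
  fun s a => if a = π s then 1 else 0

theorem isStochPolicy_detPolicy [DecidableEq A] (π : S → A) :
    IsStochPolicy (detPolicy (S := S) π) :=
  fun s => isDist_ite_eq (π s)

theorem IsGreedy.iSup_eq {Q : S → A → ℝ} {π : S → A} (hπ : IsGreedy Q π) (s : S) :
    ⨆ a, Q s a = Q s (π s) :=
  have : Nonempty A := ⟨π s⟩
  le_antisymm (ciSup_le (hπ s)) (le_ciSup (Set.finite_range _).bddAbove _)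

theorem exists_isGreedy [Nonempty A] (Q : S → A → ℝ) : ∃ π : S → A, IsGreedy Q π := by
  choose π hπ using fun s => Finite.exists_max (Q s)
  exact ⟨π, hπ⟩

end Policy

section
variable {S A : Type*} [Fintype S] [Fintype A]

def transitionMatrix (P : S → A → S → ℝ) (σ : S → A → ℝ) : Matrix S S ℝ :=
  Matrix.of fun s s' => ∑ a, σ s a * P s a s'

def policyReward (R : S → A → ℝ) (σ : S → A → ℝ) : S → ℝ :=
  fun s => ∑ a, σ s a * R s a

theorem stateDist_eq_vecMul [DecidableEq S] (P : S → A → S → ℝ) (σ : S → A → ℝ)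
    (init : S → ℝ) (t : ℕ) : stateDist P σ init t = init ᵥ* transitionMatrix P σ ^ t := by
  induction t with
  | zero => simp [stateDist]
  | succ t ih =>
    ext s'
    rw [pow_succ, ← vecMul_vecMul, ← ih]
    simp only [stateDist, vecMul, dotProduct, transitionMatrix, of_apply, Finset.mul_sum, mul_assoc]

theorem sum_stateDist_mul_reward (P : S → A → S → ℝ) (R : S → A → ℝ) (σ : S → A → ℝ)
    (init : S → ℝ) (t : ℕ) :
    ∑ s, ∑ a, stateDist P σ init t s * σ s a * R s a =
      stateDist P σ init t ⬝ᵥ policyReward R σ := by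
  simp only [dotProduct, policyReward, Finset.mul_sum, mul_assoc]

variable {P : S → A → S → ℝ} {R : S → A → ℝ} {σ : S → A → ℝ}

theorem isDist_transitionMatrix (hP : IsKernel P) (hσ : IsStochPolicy σ) (s : S) :
    IsDist (transitionMatrix P σ s) := by
  refine ⟨fun s' => Finset.sum_nonneg fun a _ => mul_nonneg ((hσ s).1 a) ((hP s a).1 s'), ?_⟩
  simp only [transitionMatrix, of_apply]
  rw [Finset.sum_comm]
  simp only [← Finset.mul_sum, (hP s _).2, mul_one, (hσ s).2]

section LinftyOpNorm
-- the ℓ∞ operator norm (maximal absolute row sum), for which a stochastic matrix has norm `1`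
attribute [local instance] Matrix.linftyOpNormedAddCommGroup Matrix.linftyOpNormedRing
  Matrix.linftyOpNormedSpace

theorem linfty_opNorm_smul_transitionMatrix_lt_one {γ : ℝ} (hγ0 : 0 ≤ γ) (hγ1 : γ < 1)
    (hP : IsKernel P) (hσ : IsStochPolicy σ) : ‖γ • transitionMatrix P σ‖ < 1 := by
  have hrow : (Finset.univ.sup fun s => ∑ s', ‖(γ • transitionMatrix P σ) s s'‖₊) ≤
      γ.toNNReal := by
    refine Finset.sup_le fun s _ => ?_
    have hs := isDist_transitionMatrix hP hσ s
    rw [← NNReal.coe_le_coe, NNReal.coe_sum, Real.coe_toNNReal _ hγ0]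
    simp only [coe_nnnorm, Matrix.smul_apply, smul_eq_mul, norm_mul, Real.norm_of_nonneg hγ0,
      Real.norm_of_nonneg (hs.1 _), ← Finset.mul_sum, hs.2, mul_one, le_refl]
  rw [linfty_opNorm_def]
  exact ((NNReal.coe_le_coe.2 hrow).trans_eq (Real.coe_toNNReal _ hγ0)).trans_lt hγ1

variable [DecidableEq S]

theorem summable_pow_of_linfty_opNorm_lt_one {M : Matrix S S ℝ} (h : ‖M‖ < 1) :
    Summable fun t => M ^ t :=
  have : CompleteSpace (Matrix S S ℝ) := FiniteDimensional.complete ℝ _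
  summable_geometric_of_norm_lt_one h

theorem one_sub_mul_tsum_pow_of_linfty_opNorm_lt_one {M : Matrix S S ℝ} (h : ‖M‖ < 1) :
    (1 - M) * ∑' t, M ^ t = 1 :=
  have : CompleteSpace (Matrix S S ℝ) := FiniteDimensional.complete ℝ _
  mul_neg_geom_series M h

end LinftyOpNorm

variable (P R) (γ : ℝ)

def lookahead (V : S → ℝ) (s : S) (a : A) : ℝ :=
  R s a + γ * ∑ s', P s a s' * V s'

def policyBellman (σ : S → A → ℝ) (V : S → ℝ) (s : S) : ℝ :=
  ∑ a, σ s a * lookahead P R γ V s a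

noncomputable def valueFun [DecidableEq S] (σ : S → A → ℝ) : S → ℝ :=
  (∑' t : ℕ, (γ • transitionMatrix P σ) ^ t) *ᵥ policyReward R σ

variable {P R γ}

theorem policyBellman_eq (σ : S → A → ℝ) (V : S → ℝ) :
    policyBellman P R γ σ V = policyReward R σ + γ • (transitionMatrix P σ *ᵥ V) := by
  ext s
  simp only [policyBellman, lookahead, policyReward, Pi.add_apply, Pi.smul_apply, smul_eq_mul,
    mulVec, dotProduct, transitionMatrix, of_apply, mul_add, Finset.sum_add_distrib,
    Finset.mul_sum, Finset.sum_mul]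
  rw [Finset.sum_comm (s := Finset.univ (α := A))]
  congr 1
  exact Finset.sum_congr rfl fun _ _ => Finset.sum_congr rfl fun _ _ => by ring

theorem policyBellman_detPolicy [DecidableEq A] (π : S → A) (V : S → ℝ) (s : S) :
    policyBellman P R γ (detPolicy π) V s = lookahead P R γ V s (π s) := by
  simp [policyBellman, detPolicy]

theorem le_of_le_policyBellman_of_policyBellman_le (hγ0 : 0 ≤ γ) (hγ1 : γ < 1) (hP : IsKernel P)
    (hσ : IsStochPolicy σ) {U W : S → ℝ} (hU : ∀ s, U s ≤ policyBellman P R γ σ U s)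
    (hW : ∀ s, policyBellman P R γ σ W s ≤ W s) (s : S) : U s ≤ W s := by
  have hstep : ∀ s, U s - W s ≤ γ * ⨆ s', (U s' - W s') := fun s =>
    calc U s - W s ≤ policyBellman P R γ σ U s - policyBellman P R γ σ W s := by
          linarith [hU s, hW s]
      _ = γ * ∑ s', transitionMatrix P σ s s' * (U s' - W s') := by
          simp only [policyBellman_eq, Pi.add_apply, Pi.smul_apply, smul_eq_mul, mulVec,
            dotProduct, mul_sub, Finset.sum_sub_distrib]
          ring
      _ ≤ γ * ⨆ s', (U s' - W s') :=
          mul_le_mul_of_nonneg_left ((isDist_transitionMatrix hP hσ s).sum_mul_le_iSup _) hγ0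
  linarith [nonpos_of_le_mul_iSup hγ1 hstep s]

variable [DecidableEq S]

theorem expReturn_eq_dotProduct_valueFun (hγ0 : 0 ≤ γ) (hγ1 : γ < 1) (hP : IsKernel P)
    (hσ : IsStochPolicy σ) (init : S → ℝ) :
    expReturn P R γ σ init = init ⬝ᵥ valueFun P R γ σ := by
  have hterm : ∀ t, γ ^ t * ∑ s, ∑ a, stateDist P σ init t s * σ s a * R s a =
      init ⬝ᵥ ((γ • transitionMatrix P σ) ^ t *ᵥ policyReward R σ) := fun t => by
    rw [sum_stateDist_mul_reward, stateDist_eq_vecMul, ← dotProduct_mulVec, smul_pow,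
      smul_mulVec, dotProduct_smul, smul_eq_mul]
  let L : Matrix S S ℝ →+ ℝ := AddMonoidHom.mk' (fun X => init ⬝ᵥ (X *ᵥ policyReward R σ))
    fun X Y => by simp only [add_mulVec, dotProduct_add]
  have hL : Continuous L :=
    continuous_const.dotProduct (continuous_id.matrix_mulVec continuous_const)
  have hsum := summable_pow_of_linfty_opNorm_lt_one
    (linfty_opNorm_smul_transitionMatrix_lt_one hγ0 hγ1 hP hσ)
  simp only [expReturn, hterm]
  exact (hsum.map_tsum L hL).symm

theorem valueFun_eq_policyBellman (hγ0 : 0 ≤ γ) (hγ1 : γ < 1) (hP : IsKernel P)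
    (hσ : IsStochPolicy σ) : valueFun P R γ σ = policyBellman P R γ σ (valueFun P R γ σ) := by
  have h := congrArg (· *ᵥ policyReward R σ) (one_sub_mul_tsum_pow_of_linfty_opNorm_lt_one
    (linfty_opNorm_smul_transitionMatrix_lt_one hγ0 hγ1 hP hσ))
  simp only [← mulVec_mulVec, one_mulVec, sub_mulVec, smul_mulVec] at h
  rw [policyBellman_eq, ← h, valueFun]
  abel

theorem expReturn_ite_eq (hγ0 : 0 ≤ γ) (hγ1 : γ < 1) (hP : IsKernel P) (hσ : IsStochPolicy σ)
    (s : S) : expReturn P R γ σ (fun s' => if s' = s then 1 else 0) = valueFun P R γ σ s := by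
  simp [expReturn_eq_dotProduct_valueFun hγ0 hγ1 hP hσ, dotProduct]

variable (P R γ) in
def IsBellmanOptimal (Q : S → A → ℝ) : Prop :=
  ∀ s a, Q s a = lookahead P R γ (fun s' => ⨆ a', Q s' a') s a

theorem valueFun_le_iSup (hγ0 : 0 ≤ γ) (hγ1 : γ < 1) (hP : IsKernel P) {Q : S → A → ℝ}
    (hQ : IsBellmanOptimal P R γ Q) (hσ : IsStochPolicy σ) (s : S) :
    valueFun P R γ σ s ≤ ⨆ a, Q s a := by
  refine le_of_le_policyBellman_of_policyBellman_le (W := fun s => ⨆ a, Q s a) hγ0 hγ1 hP hσ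
    (fun s => (congrFun (valueFun_eq_policyBellman hγ0 hγ1 hP hσ) s).le) (fun s => ?_) s
  calc policyBellman P R γ σ (fun s => ⨆ a, Q s a) s = ∑ a, σ s a * Q s a :=
        Finset.sum_congr rfl fun a _ => by rw [← hQ s a]
    _ ≤ ⨆ a, Q s a := (hσ s).sum_mul_le_iSup _

theorem IsGreedy.valueFun_detPolicy [DecidableEq A] (hγ0 : 0 ≤ γ) (hγ1 : γ < 1)
    (hP : IsKernel P) {Q : S → A → ℝ} (hQ : IsBellmanOptimal P R γ Q) {π : S → A}
    (hπ : IsGreedy Q π) (s : S) : valueFun P R γ (detPolicy π) s = ⨆ a, Q s a := by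
  have hdet := isStochPolicy_detPolicy (S := S) π
  refine le_antisymm (valueFun_le_iSup hγ0 hγ1 hP hQ hdet s) ?_
  refine le_of_le_policyBellman_of_policyBellman_le (U := fun s => ⨆ a, Q s a) hγ0 hγ1 hP hdet
    (fun s => ?_) (fun s => (congrFun (valueFun_eq_policyBellman hγ0 hγ1 hP hdet) s).ge) s
  rw [policyBellman_detPolicy, ← hQ, hπ.iSup_eq]

theorem IsBellmanOptimal.iSup_le [Nonempty A] (hγ0 : 0 ≤ γ) (hγ1 : γ < 1) (hP : IsKernel P)
    {Q Q' : S → A → ℝ} (hQ : IsBellmanOptimal P R γ Q) (hQ' : IsBellmanOptimal P R γ Q')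
    (s : S) : ⨆ a, Q s a ≤ ⨆ a, Q' s a := by
  classical
  obtain ⟨π, hπ⟩ := exists_isGreedy Q
  rw [← hπ.valueFun_detPolicy hγ0 hγ1 hP hQ]
  exact valueFun_le_iSup hγ0 hγ1 hP hQ' (isStochPolicy_detPolicy π) s

theorem IsBellmanOptimal.unique [Nonempty A] (hγ0 : 0 ≤ γ) (hγ1 : γ < 1) (hP : IsKernel P)
    {Q₁ Q₂ : S → A → ℝ} (hQ₁ : IsBellmanOptimal P R γ Q₁) (hQ₂ : IsBellmanOptimal P R γ Q₂) :
    Q₁ = Q₂ := by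
  have hsup : (fun s => ⨆ a, Q₁ s a) = fun s => ⨆ a, Q₂ s a :=
    funext fun s => le_antisymm (hQ₁.iSup_le hγ0 hγ1 hP hQ₂ s) (hQ₂.iSup_le hγ0 hγ1 hP hQ₁ s)
  ext s a
  rw [hQ₁, hQ₂, hsup]

theorem IsGreedy.of_valueFun_detPolicy_eq [DecidableEq A] (hγ0 : 0 ≤ γ) (hγ1 : γ < 1)
    (hP : IsKernel P) {Q : S → A → ℝ} (hQ : IsBellmanOptimal P R γ Q) {π : S → A}
    (hV : ∀ s, valueFun P R γ (detPolicy π) s = ⨆ a, Q s a) : IsGreedy Q π := by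
  have hV' : valueFun P R γ (detPolicy π) = fun s => ⨆ a, Q s a := funext hV
  intro s a
  calc Q s a ≤ ⨆ a, Q s a := le_ciSup (Set.finite_range _).bddAbove a
    _ = lookahead P R γ (valueFun P R γ (detPolicy π)) s (π s) := by
        rw [← hV s, ← policyBellman_detPolicy,
          ← valueFun_eq_policyBellman hγ0 hγ1 hP (isStochPolicy_detPolicy π)]
    _ = Q s (π s) := by rw [hV', ← hQ]

variable (P R γ) in
def IsOptimalPolicy (σ : S → A → ℝ) : Prop :=
  ∀ init : S → ℝ, IsDist init → ∀ σ' : S → A → ℝ, IsStochPolicy σ' →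
    expReturn P R γ σ' init ≤ expReturn P R γ σ init

theorem IsGreedy.isOptimalPolicy [DecidableEq A] (hγ0 : 0 ≤ γ) (hγ1 : γ < 1) (hP : IsKernel P)
    {Q : S → A → ℝ} (hQ : IsBellmanOptimal P R γ Q) {π : S → A} (hπ : IsGreedy Q π) :
    IsOptimalPolicy P R γ (detPolicy π) := by
  intro init hinit σ hσ
  rw [expReturn_eq_dotProduct_valueFun hγ0 hγ1 hP hσ,
    expReturn_eq_dotProduct_valueFun hγ0 hγ1 hP (isStochPolicy_detPolicy π)]
  refine Finset.sum_le_sum fun s _ => mul_le_mul_of_nonneg_left ?_ (hinit.1 s)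
  rw [hπ.valueFun_detPolicy hγ0 hγ1 hP hQ]
  exact valueFun_le_iSup hγ0 hγ1 hP hQ hσ s

theorem IsOptimalPolicy.isGreedy [Nonempty A] [DecidableEq A] (hγ0 : 0 ≤ γ) (hγ1 : γ < 1)
    (hP : IsKernel P) {Q : S → A → ℝ} (hQ : IsBellmanOptimal P R γ Q) {π : S → A}
    (hπ : IsOptimalPolicy P R γ (detPolicy π)) : IsGreedy Q π := by
  refine IsGreedy.of_valueFun_detPolicy_eq hγ0 hγ1 hP hQ fun s => ?_
  obtain ⟨g, hg⟩ := exists_isGreedy Q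
  have hg_le := hπ _ (isDist_ite_eq s) _ (isStochPolicy_detPolicy g)
  rw [expReturn_ite_eq hγ0 hγ1 hP (isStochPolicy_detPolicy g),
    expReturn_ite_eq hγ0 hγ1 hP (isStochPolicy_detPolicy π),
    hg.valueFun_detPolicy hγ0 hγ1 hP hQ] at hg_le
  exact le_antisymm (valueFun_le_iSup hγ0 hγ1 hP hQ (isStochPolicy_detPolicy π) s) hg_le

end

theorem bellman_optimality_iff_mdp_optimal_general
    {S A : Type*} [Fintype S] [Fintype A] [Nonempty A] [DecidableEq A]
    (P : S → A → S → ℝ) (R : S → A → ℝ) (γ : ℝ)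
    (hP : IsKernel P) (hγ0 : 0 ≤ γ) (hγ1 : γ < 1)
    -- `Qstar` is the (unique) optimal action-value function of the underlying MDP `M`
    (Qstar : S → A → ℝ)
    (hQstar : ∀ s a, Qstar s a = R s a + γ * ∑ s', P s a s' * ⨆ a', Qstar s' a')
    (Q : S → A → ℝ) (π : S → A) :
    ((∀ s a, Q s a = R s a + γ * ∑ s', P s a s' * ⨆ a', Q s' a') ∧
      (∀ s a, Q s a ≤ Q s (π s)))
    ↔ (Q = Qstar ∧
        ∀ init : S → ℝ, IsDist init → ∀ π' : S → A → ℝ, IsStochPolicy π' →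
          expReturn P R γ π' init ≤
            expReturn P R γ (fun s a => if a = π s then 1 else 0) init) := by
  classical
  constructor
  · rintro ⟨hQ, hπ⟩
    obtain rfl : Q = Qstar := IsBellmanOptimal.unique hγ0 hγ1 hP hQ hQstar
    exact ⟨rfl, IsGreedy.isOptimalPolicy hγ0 hγ1 hP hQ hπ⟩
  · rintro ⟨rfl, hopt⟩
    exact ⟨hQstar, IsOptimalPolicy.isGreedy hγ0 hγ1 hP hQstar hopt⟩

/-- on a MAMDP `(M, PA)`, a Q-function and deterministic policy π satisfy
the Bellman optimality objective iff `Q = Q*_M` and π is an optimal policy of the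
underlying MDP `M`; the solution is independent of `PA`. -/
theorem bellman_optimality_iff_mdp_optimal
    {S A : Type*} [Fintype S] [Fintype A] [Nonempty A] [DecidableEq A]
    (P : S → A → S → ℝ) (R : S → A → ℝ) (γ : ℝ)
    (hP : IsKernel P) (hγ0 : 0 ≤ γ) (hγ1 : γ < 1)
    (PA : (S → A → ℝ) → S → A → ℝ)
    (hPA : ∀ π, IsStochPolicy π → IsStochPolicy (PA π))
    -- `Qstar` is the (unique) optimal action-value function of the underlying MDP `M`
    (Qstar : S → A → ℝ)
    (hQstar : ∀ s a, Qstar s a = R s a + γ * ∑ s', P s a s' * ⨆ a', Qstar s' a')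
    (Q : S → A → ℝ) (π : S → A) :
    ((∀ s a, Q s a = R s a + γ * ∑ s', P s a s' * ⨆ a', Q s' a') ∧
      (∀ s a, Q s a ≤ Q s (π s)))
    ↔ (Q = Qstar ∧
        ∀ init : S → ℝ, IsDist init → ∀ π' : S → A → ℝ, IsStochPolicy π' →
          expReturn P R γ π' init ≤
            expReturn P R γ (fun s a => if a = π s then 1 else 0) init) :=
  bellman_optimality_iff_mdp_optimal_general P R γ hP hγ0 hγ1 Qstar hQstar Q π
end

section
/- There exists a MAMDP for which the empirical policy value objective has no solution: no pair (Q, π) satisfies both Q(s,a) = R(s,a) + γ E_{s'~P(s,a)} E_{a'~P_A(·|π,s')}[Q(s',a')] and π(s) = argmax_a Q(s,a). Concretely, consider a MAMDP with one non-terminal state S₀ and actions {1,2,3}, where action 1 gives reward 2 and terminates, action 2 gives reward −2 and terminates, action 3 gives reward 1 and returns to S₀; γ = 0.9; and the action selection function executes action 2 whenever π(3|S₀) = 1, and otherwise follows π unchanged. This MAMDP admits no solution to the empirical policy value objective. -/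
open scoped BigOperators
open Classical

/-- Reward function of the counterexample MAMDP: state `false` is S₀, `true` is terminal;
action 0 gives reward 2, action 1 gives −2, action 2 gives 1; the terminal state gives 0. -/
noncomputable def cR : Bool → Fin 3 → ℝ := fun s a =>
  if s then 0 else if a = 0 then 2 else if a = 1 then -2 else 1

/-- Transitions: in S₀, actions 0 and 1 terminate, action 2 returns to S₀;
the terminal state self-loops. -/
noncomputable def cP : Bool → Fin 3 → Bool → ℝ := fun s a s' =>
  if s = false ∧ a = 2 then (if s' = false then 1 else 0) else (if s' = true then 1 else 0)

/-- Action selection: if the policy takes action 2 (the self-loop) in S₀ with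
probability 1, the executed action is forced to action 1; otherwise the policy's
action is executed unchanged. -/
noncomputable def cPA : (Bool → Fin 3 → ℝ) → Bool → Fin 3 → ℝ := fun π s a =>
  if s = false ∧ π false 2 = 1 then (if a = 1 then 1 else 0) else π s a

/-- the empirical policy value objective has no solution on this MAMDP:
no `(Q, π)` with π a stochastic policy satisfies the empirical policy value equation
(with discount 0.9) together with π being greedy with respect to `Q`. -/
theorem no_empirical_policy_value_solution :
    ¬ ∃ (Q : Bool → Fin 3 → ℝ) (π : Bool → Fin 3 → ℝ),
      (∀ s, (∀ a, 0 ≤ π s a) ∧ ∑ a, π s a = 1) ∧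
      (∀ s a, Q s a = cR s a + (0.9 : ℝ) * ∑ s', cP s a s' * ∑ a', cPA π s' a' * Q s' a') ∧
      (∀ s a, 0 < π s a → ∀ b, Q s b ≤ Q s a) := by
  rintro ⟨Q, π, hprob, hQ, hg⟩
  have hsumT := (hprob true).2
  have hsumF := (hprob false).2
  rw [Fin.sum_univ_three] at hsumT hsumF
  have hVdef : ∀ a : Fin 3, Q true a =
      0.9 * (π true 0 * Q true 0 + π true 1 * Q true 1 + π true 2 * Q true 2) := by
    intro a
    have h := hQ true a
    simp [cR, cP, cPA, Fintype.sum_bool, Fin.sum_univ_three] at h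
    linarith [h]
  have h0 := hVdef 0
  have h1 := hVdef 1
  have h2 := hVdef 2
  have hV : π true 0 * Q true 0 + π true 1 * Q true 1 + π true 2 * Q true 2 = 0 := by
    linear_combination (10 : ℝ) * ((π true 0) * h0 + (π true 1) * h1 + (π true 2) * h2
      + (0.9 : ℝ) * (π true 0 * Q true 0 + π true 1 * Q true 1 + π true 2 * Q true 2) * hsumT)
  have hQ0 : Q false 0 = 2 := by
    have h := hQ false 0
    simp [cR, cP, cPA, Fintype.sum_bool, Fin.sum_univ_three] at h
    linarith [h, hV]
  have hQ1 : Q false 1 = -2 := by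
    have h := hQ false 1
    simp [cR, cP, cPA, Fintype.sum_bool, Fin.sum_univ_three] at h
    linarith [h, hV]
  have h := hQ false 2
  simp [cR, cP, cPA, Fintype.sum_bool, Fin.sum_univ_three] at h
  by_cases hc : π false 2 = 1
  · rw [if_pos hc] at h
    have hge := hg false 2 (by rw [hc]; norm_num) 0
    rw [hQ0] at hge
    nlinarith [h, hQ1, hge]
  · rw [if_neg hc] at h
    have hn0 := (hprob false).1 0
    have hn1 := (hprob false).1 1
    have hn2 := (hprob false).1 2
    have hp1 : π false 1 = 0 := by
      by_contra hne
      have hpos : 0 < π false 1 := lt_of_le_of_ne hn1 (Ne.symm hne)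
      have := hg false 1 hpos 0
      rw [hQ0, hQ1] at this
      linarith
    have hlt : π false 2 < 1 := lt_of_le_of_ne (by linarith) hc
    have hp0 : 0 < π false 0 := by linarith
    have hle := hg false 0 hp0 2
    rw [hQ0] at hle
    nlinarith [h, hle, hlt, hn2, hQ0, hQ1, hsumF, hp1]
end
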